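/- arXiv:1809.04823 — 2 statements merged into one kernel-verified Lean document; each statement's English description precedes it below -/
import Mathlib

section
/- Let L ⊆ ℕ be a piecewise syndetic set with bound B, and let l₀ be a natural number. Then the set L₀ := { l ∈ L : (l + {l₀, l₀+1, …, l₀+B}) ∩ L ≠ ∅ } is piecewise syndetic. -/
open scoped BigOperators

namespace MahlerPaper

/-- The monomial action of a matrix `T` with natural number entries on a point of `ℂ^σ`:
`(T α) i = ∏ j, (α j) ^ (T i j)`. -/
noncomputable def act {σ : Type*} [Fintype σ] (T : Matrix σ σ ℕ) (α : σ → ℂ) : σ → ℂ :=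
  fun i => ∏ j, α j ^ T i j

/-- The multivariate power series `F` converges at `z` (as an absolutely summable family of
monomials) with sum `v`. -/
def HasEval {σ : Type*} [Fintype σ] (F : MvPowerSeries σ ℂ) (z : σ → ℂ) (v : ℂ) : Prop :=
  HasSum (fun d : σ →₀ ℕ => MvPowerSeries.coeff d F * ∏ i, z i ^ d i) v

/-- The sum of the multivariate power series `F` at the point `z` (junk value if not summable). -/
noncomputable def psEval {σ : Type*} [Fintype σ] (F : MvPowerSeries σ ℂ) (z : σ → ℂ) : ℂ :=
  ∑' d : σ →₀ ℕ, MvPowerSeries.coeff d F * ∏ i, z i ^ d i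

/-- All coefficients of `F` are algebraic numbers. -/
def AlgCoeffs {σ : Type*} (F : MvPowerSeries σ ℂ) : Prop :=
  ∀ d, IsAlgebraic ℚ (MvPowerSeries.coeff d F)

/-- `F` converges on the open polydisc of radius `r` around the origin. -/
def ConvOn {σ : Type*} [Fintype σ] (F : MvPowerSeries σ ℂ) (r : ℝ) : Prop :=
  ∀ z : σ → ℂ, (∀ i, ‖z i‖ < r) → ∃ v, HasEval F z v

/-- The spectral radius of a square matrix with natural number entries:
the supremum of the absolute values of the (complex) roots of its characteristic polynomial. -/
noncomputable def specRad {n : ℕ} (T : Matrix (Fin n) (Fin n) ℕ) : ℝ :=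
  sSup {x : ℝ | ∃ μ : ℂ, (Matrix.charpoly (T.map (fun a => (a : ℂ)))).IsRoot μ ∧
    ‖μ‖ = x}

/-- The class `𝓜`: `T` is non-singular, no eigenvalue of `T` is a root of unity, and `T` has an
eigenvector with positive coordinates for the eigenvalue `ρ(T)`. -/
def ClassM {n : ℕ} (T : Matrix (Fin n) (Fin n) ℕ) : Prop :=
  (T.map (fun a => (a : ℚ))).det ≠ 0 ∧
  (∀ μ : ℂ, (Matrix.charpoly (T.map (fun a => (a : ℂ)))).IsRoot μ →
    ∀ k : ℕ, 0 < k → μ ^ k ≠ 1) ∧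
  (∃ v : Fin n → ℝ, (∀ i, 0 < v i) ∧ (T.map (fun a => (a : ℝ))).mulVec v = specRad T • v)

/-- `α` is `T`-independent: there is no non-zero integer tuple `μ` with `(T^k α)^μ = 1` for all
`k` in an arithmetic progression. -/
def TIndep {n : ℕ} (T : Matrix (Fin n) (Fin n) ℕ) (α : Fin n → ℂ) : Prop :=
  ¬ ∃ μ : Fin n → ℤ, μ ≠ 0 ∧ ∃ a b : ℕ, 0 < b ∧
    ∀ k : ℕ, (∏ i, act (T ^ (a + b * k)) α i ^ μ i) = 1

/-- Conditions (a), (b), (c) of admissibility of the pair `(T, α)`, for given `ρ` and `c`. -/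
def AdmissibleWith {n : ℕ} (T : Matrix (Fin n) (Fin n) ℕ) (α : Fin n → ℂ) (ρ c : ℝ) : Prop :=
  1 < ρ ∧ 0 < c ∧
  -- (a) the entries of `T^k` are `O(ρ^k)`
  (∃ C : ℝ, ∀ (k : ℕ) (i j : Fin n), (((T ^ k) i j : ℕ) : ℝ) ≤ C * ρ ^ k) ∧
  -- (b) `log |(T^k α) i| ≤ -c ρ^k`
  (∀ k : ℕ, 1 ≤ k → ∀ i, Real.log (‖act (T ^ k) α i‖) ≤ -c * ρ ^ k) ∧
  -- (c) every analytic function near `0` that is not identically zero is non-zero at `T^k α`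
  -- for infinitely many `k`
  (∀ f : (Fin n → ℂ) → ℂ, AnalyticAt ℂ f 0 → ¬ (∀ᶠ z in nhds (0 : Fin n → ℂ), f z = 0) →
    {k : ℕ | f (act (T ^ k) α) ≠ 0}.Infinite)

/-- The pair `(T, α)` is admissible. -/
def Admissible {n : ℕ} (T : Matrix (Fin n) (Fin n) ℕ) (α : Fin n → ℂ) : Prop :=
  ∃ ρ c : ℝ, AdmissibleWith T α ρ c

/-- `L` is piecewise syndetic with bound `B`. -/
def PWSyndeticWith (B : ℕ) (L : Set ℕ) : Prop :=
  ∀ M : ℕ, 2 ≤ M → ∃ l : ℕ → ℕ, (∀ i, i < M → l i ∈ L) ∧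
    ∀ i, i + 1 < M → l i < l (i + 1) ∧ l (i + 1) - l i ≤ B

/-- `L` is piecewise syndetic. -/
def PWSyndetic (L : Set ℕ) : Prop := ∃ B : ℕ, PWSyndeticWith B L

/-- `c` lies in the `ℚ̄`-span of the finite family `a` (this encodes membership of `c` in a
finite-dimensional `ℚ̄`-vector subspace of `ℂ`). -/
def InSpanAlg {t : ℕ} (a : Fin t → ℂ) (c : ℂ) : Prop :=
  ∃ q : Fin t → ℂ, (∀ s, IsAlgebraic ℚ (q s)) ∧ c = ∑ s, q s * a s

/-- The purely exponential-polynomial part `∏ i, γ_{s,i}^{k_i} k_i^{e_{s,i}}` of the `s`-th term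
of a `(Γ,r)`-exponential polynomial. -/
noncomputable def expCoef {p r : ℕ} {Γ : Subgroup ℂˣ}
    (γ : Fin p → Fin r → Γ) (e : Fin p → Fin r → ℕ) (k : Fin r → ℕ) (s : Fin p) : ℂ :=
  ∏ i, (((γ s i : ℂˣ) : ℂ) ^ (k i) * (k i : ℂ) ^ (e s i))

/-- `Γ` is a torsion-free subgroup of `ℂˣ`. -/
def TorsionFreeSubgroup (Γ : Subgroup ℂˣ) : Prop :=
  ∀ u : ℂˣ, u ∈ Γ → ∀ k : ℕ, 0 < k → u ^ k = 1 → u = 1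

/-- Condition (A): the entries of the block diagonal matrix `T_k` are `O(ρ^{|k|})` on `K`. -/
def CondA {r : ℕ} {n : Fin r → ℕ} (T : ∀ i, Matrix (Fin (n i)) (Fin (n i)) ℕ)
    (K : Set (Fin r → ℕ)) (ρ : ℝ) : Prop :=
  ∃ C : ℝ, ∀ k ∈ K, ∀ (i : Fin r) (a b : Fin (n i)),
    ((((T i) ^ (k i)) a b : ℕ) : ℝ) ≤ C * ρ ^ (∑ j, k j)

/-- Condition (B): `log ‖T_k α‖ ≤ -c ρ^{|k|}` on `K`. -/
def CondB {r : ℕ} {n : Fin r → ℕ} (T : ∀ i, Matrix (Fin (n i)) (Fin (n i)) ℕ)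
    (α : ∀ i, Fin (n i) → ℂ) (K : Set (Fin r → ℕ)) (ρ : ℝ) : Prop :=
  ∃ c : ℝ, 0 < c ∧ ∀ k ∈ K, ∀ (i : Fin r) (a : Fin (n i)),
    Real.log (‖act ((T i) ^ (k i)) (α i) a‖) ≤ -c * ρ ^ (∑ j, k j)

/-- Condition (C): for every finite-dimensional `ℚ̄`-subspace `L ⊆ ℂ` (encoded by a spanning
family `a`) and every `(Γ,r)`-exponential polynomial `ψ` with coefficients convergent power
series with coefficients in `L`, if the family `(ψ(k,·))_{k ∈ K}` is not identically zero then
`ψ(k, pt k) ≠ 0` for infinitely many `k ∈ K`. -/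
def CondC {r : ℕ} (Γ : Subgroup ℂˣ) {σ : Type*} [Fintype σ]
    (K : Set (Fin r → ℕ)) (pt : (Fin r → ℕ) → σ → ℂ) : Prop :=
  ∀ (t p : ℕ) (a : Fin t → ℂ) (γ : Fin p → Fin r → Γ) (e : Fin p → Fin r → ℕ)
    (g : Fin p → MvPowerSeries σ ℂ),
    (∀ s d, InSpanAlg a (MvPowerSeries.coeff d (g s))) →
    (∃ rad : ℝ, 0 < rad ∧ ∀ s, ConvOn (g s) rad) →
    (¬ ∀ k ∈ K, ∀ d : σ →₀ ℕ, (∑ s, expCoef γ e k s * MvPowerSeries.coeff d (g s)) = 0) →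
    {k ∈ K | (∑ s, expCoef γ e k s * psEval (g s) (pt k)) ≠ 0}.Infinite

/-- The point `T_k α = (T₁^{k₁} α₁, …, T_r^{k_r} α_r)` of `ℂ^N`, `N = Σ n_i`. -/
noncomputable def familyPt {r : ℕ} {n : Fin r → ℕ} (T : ∀ i, Matrix (Fin (n i)) (Fin (n i)) ℕ)
    (α : ∀ i, Fin (n i) → ℂ) (k : Fin r → ℕ) : ((i : Fin r) × Fin (n i)) → ℂ :=
  fun e => act ((T e.1) ^ (k e.1)) (α e.1) e.2

/-- The family of pairs `(T_i, α_i)` is admissible (Conditions (A), (B), (C) relative to `Γ`). -/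
def FamilyAdmissible {r : ℕ} {n : Fin r → ℕ} (Γ : Subgroup ℂˣ)
    (T : ∀ i, Matrix (Fin (n i)) (Fin (n i)) ℕ) (α : ∀ i, Fin (n i) → ℂ) : Prop :=
  ∃ K : Set (Fin r → ℕ), K.Infinite ∧ ∃ ρ : ℝ, 1 < ρ ∧
    CondA T K ρ ∧ CondB T α K ρ ∧ CondC Γ K (familyPt T α)

/-- The vector `Θ = (1/log ρ(T₁), …, 1/log ρ(T_r))`. -/
noncomputable def theta {r : ℕ} {n : Fin r → ℕ}
    (T : ∀ i, Matrix (Fin (n i)) (Fin (n i)) ℕ) : Fin r → ℝ :=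
  fun i => 1 / Real.log (specRad (T i))

/-- The set `𝒰(T)` of points `α ∈ (ℂ*)ⁿ` satisfying condition (b) with `ρ = ρ(T)`. -/
def UU {n : ℕ} (T : Matrix (Fin n) (Fin n) ℕ) : Set (Fin n → ℂ) :=
  {α | (∀ i, α i ≠ 0) ∧ ∃ c : ℝ, 0 < c ∧ ∀ k : ℕ, 1 ≤ k → ∀ i,
    Real.log (‖act (T ^ k) α i‖) ≤ -c * specRad T ^ k}

/-- Data of a linear Mahler system: the transformation matrix `T`, a matrix of rational
functions `A(z) = Anum(z)/Aden(z)`, a vector `F` of power series solutions and a radius `r₀`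
of convergence. -/
structure MahlerSystem (n m : ℕ) : Type where
  T : Matrix (Fin n) (Fin n) ℕ
  Anum : Matrix (Fin m) (Fin m) (MvPolynomial (Fin n) ℂ)
  Aden : MvPolynomial (Fin n) ℂ
  F : Fin m → MvPowerSeries (Fin n) ℂ
  r₀ : ℝ

namespace MahlerSystem

variable {n m : ℕ}

/-- `A(z)` belongs to `GL_m(ℚ̄(z))`: the entries of `A` are rational functions with algebraic
coefficients and `A` is invertible over the field of rational functions. -/
def GLQbar (S : MahlerSystem n m) : Prop :=
  S.Aden ≠ 0 ∧ S.Anum.det ≠ 0 ∧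
  (∀ i j d, IsAlgebraic ℚ (MvPolynomial.coeff d (S.Anum i j))) ∧
  (∀ d, IsAlgebraic ℚ (MvPolynomial.coeff d S.Aden))

/-- The power series `f_1, …, f_m` have algebraic coefficients, converge on the polydisc of
radius `r₀ > 0`, and satisfy the Mahler system `f(Tz) = A(z) f(z)` there. -/
def Holds (S : MahlerSystem n m) : Prop :=
  0 < S.r₀ ∧ (∀ j, AlgCoeffs (S.F j)) ∧ (∀ j, ConvOn (S.F j) S.r₀) ∧
  ∀ z : Fin n → ℂ, (∀ i, ‖z i‖ < S.r₀) →
    (∀ i, ‖act S.T z i‖ < S.r₀) →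
    ∀ i, MvPolynomial.eval z S.Aden * psEval (S.F i) (act S.T z)
      = ∑ j, MvPolynomial.eval z (S.Anum i j) * psEval (S.F j) z

/-- `A(z)` is well-defined and invertible at the point `β`. -/
def RegularAt (S : MahlerSystem n m) (β : Fin n → ℂ) : Prop :=
  MvPolynomial.eval β S.Aden ≠ 0 ∧ (S.Anum.map (MvPolynomial.eval β)).det ≠ 0

/-- `α` is a regular point: `A(z)` is well-defined and invertible at `T^k α` for every `k ≥ 0`. -/
def RegularPoint (S : MahlerSystem n m) (α : Fin n → ℂ) : Prop :=
  ∀ k : ℕ, S.RegularAt (act (S.T ^ k) α)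

/-- The system is regular singular: there are `d ≥ 1` and a matrix `Φ(w) = Pnum(w)/Pden(w)`,
invertible with entries in the fraction field of the ring of convergent power series with
algebraic coefficients in the ramified variables `w = z^{1/d}`, and a constant matrix
`B ∈ GL_m(ℚ̄)`, with `Φ(Tw) A(w^d) = B Φ(w)` (written with denominators cleared). -/
def RegSingular (S : MahlerSystem n m) : Prop :=
  ∃ d : ℕ, 0 < d ∧
  ∃ (Pnum : Matrix (Fin m) (Fin m) (MvPowerSeries (Fin n) ℂ))
    (Pden : MvPowerSeries (Fin n) ℂ) (B : Matrix (Fin m) (Fin m) ℂ) (r : ℝ),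
    0 < r ∧ Pden ≠ 0 ∧ Pnum.det ≠ 0 ∧
    (∀ i j, AlgCoeffs (Pnum i j)) ∧ AlgCoeffs Pden ∧
    (∀ i j, ConvOn (Pnum i j) r) ∧ ConvOn Pden r ∧
    (∀ i j, IsAlgebraic ℚ (B i j)) ∧ B.det ≠ 0 ∧
    ∀ w : Fin n → ℂ, (∀ l, ‖w l‖ < r) →
      (∀ l, ‖act S.T w l‖ < r) →
      ∀ i k,
        psEval Pden w * ∑ j, psEval (Pnum i j) (act S.T w)
            * MvPolynomial.eval (fun l => w l ^ d) (S.Anum j k)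
        = MvPolynomial.eval (fun l => w l ^ d) S.Aden * psEval Pden (act S.T w)
            * ∑ j, B i j * psEval (Pnum j k) w

/-- The power series solutions converge at every point `T^k α`, `k ≥ 0` (in particular the
values `f_j(α)` are well-defined). -/
def GoodAt (S : MahlerSystem n m) (α : Fin n → ℂ) : Prop :=
  ∀ j k, ∃ v, HasEval (S.F j) (act (S.T ^ k) α) v

end MahlerSystem

theorem exists_apply_mem_Icc_of_succ_le_add {l : ℕ → ℕ} {B n t : ℕ}
    (hstep : ∀ i < n, l (i + 1) ≤ l i + B) (h0 : l 0 ≤ t) (hn : t ≤ l n) :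
    ∃ j ≤ n, l j ∈ Set.Icc t (t + B) := by
  induction n with
  | zero => exact ⟨0, le_rfl, hn, by omega⟩
  | succ n ih =>
    by_cases htn : t ≤ l n
    · obtain ⟨j, hj, hjt⟩ := ih (fun i hi => hstep i (by omega)) htn
      exact ⟨j, by omega, hjt⟩
    · exact ⟨n + 1, le_rfl, hn, by have := hstep n (by omega); omega⟩

theorem apply_zero_add_le_of_lt_succ {l : ℕ → ℕ} {n : ℕ} (hlt : ∀ i < n, l i < l (i + 1)) :
    l 0 + n ≤ l n := by
  induction n with
  | zero => rfl
  | succ n ih =>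
    have := ih (fun i hi => hlt i (by omega))
    have := hlt n (by omega)
    omega

/-- A chain of length `M + l₀` in `L` witnesses that its first `M` terms lie in the shifted set:
from the `i`-th term, the next `l₀` terms climb at least `l₀`, and in steps of at most `B`. -/
theorem pwSyndetic_shift (L : Set ℕ) (B : ℕ) (hL : PWSyndeticWith B L) (l₀ : ℕ) :
    PWSyndetic {l | l ∈ L ∧ ∃ e, l₀ ≤ e ∧ e ≤ l₀ + B ∧ l + e ∈ L} := by
  refine ⟨B, fun M hM => ?_⟩
  obtain ⟨l, hlL, hgap⟩ := hL (M + l₀) (by omega)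
  refine ⟨l, fun i hi => ⟨hlL i (by omega), ?_⟩, fun i hi => hgap i (by omega)⟩
  have hclimb : l i + l₀ ≤ l (i + l₀) :=
    apply_zero_add_le_of_lt_succ (l := fun k => l (i + k)) fun k hk => (hgap (i + k) (by omega)).1
  obtain ⟨j, hj, hjlo, hjhi⟩ := exists_apply_mem_Icc_of_succ_le_add (l := fun k => l (i + k))
    (B := B) (t := l i + l₀) (fun k hk => Nat.sub_le_iff_le_add'.mp (hgap (i + k) (by omega)).2)
    (Nat.le_add_right _ _) hclimb
  refine ⟨l (i + j) - l i, by omega, by omega, ?_⟩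
  rw [Nat.add_sub_cancel' (by omega)]
  exact hlL (i + j) (by omega)

end MahlerPaper
end

section
/- Let T₁,…,T_r be matrices with spectral radii ρ(T_i) > 1 and set Θ := (1/log ρ(T₁),…,1/log ρ(T_r)). Let μ₁,…,μ_t ∈ ℤ^r be a basis of the space of rational linear relations among the coordinates of Θ (the orthogonal complement of Θ in ℚ^r). Then there exist a piecewise syndetic set L ⊆ ℕ and a family of vectors (k_l)_{l∈L} in ℤ^r, each orthogonal to the span of μ₁,…,μ_t, such that k_l = lΘ + O(1) (i.e. ‖k_l − lΘ‖ is bounded on L). -/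
open scoped BigOperators

namespace MahlerPaper

/-!
Round `l • Θ` coordinatewise. Since `μ Θ = 0`, the defect `μ (round (l • Θ))` is an integer
vector of size at most `∑ |μ_{s,i}|`, so it takes only finitely many values. Correcting the
rounding by one fixed integer preimage of each of these values produces integer vectors in the
kernel of `μ` at bounded distance from `l • Θ`, for every `l`; so `L = ℕ` already works.
-/

open Matrix

theorem _root_.Set.Finite.exists_finite_range_comp_eq {α β γ : Type*} {g : β → γ} {f : α → β}
    (h : (Set.range (g ∘ f)).Finite) :
    ∃ c : α → β, (Set.range c).Finite ∧ g ∘ c = g ∘ f := by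
  have := h.to_subtype
  let sec : Set.range (g ∘ f) → α := fun v => v.2.choose
  refine ⟨fun a => f (sec ⟨g (f a), a, rfl⟩), (Set.finite_range (f ∘ sec)).subset ?_,
    funext fun a => (⟨g (f a), a, rfl⟩ : Set.range (g ∘ f)).2.choose_spec⟩
  rintro _ ⟨a, rfl⟩
  exact ⟨_, rfl⟩

section IntegerKernel

variable {ι κ : Type*} [Fintype ι] (μ : Matrix κ ι ℤ)

theorem abs_mulVec_round_le {x : ι → ℝ} (hx : μ.map ((↑) : ℤ → ℝ) *ᵥ x = 0) (s : κ) :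
    |(μ *ᵥ fun i => round (x i)) s| ≤ ∑ i, |μ s i| := by
  have hdefect : ((μ *ᵥ fun i => round (x i)) s : ℝ) = ∑ i, (μ s i : ℝ) * (round (x i) - x i) := by
    have hxs : ∑ i, (μ s i : ℝ) * x i = 0 := congrFun hx s
    simp only [mul_sub, Finset.sum_sub_distrib, hxs, sub_zero]
    push_cast [mulVec, dotProduct]
    rfl
  have hreal : |((μ *ᵥ fun i => round (x i)) s : ℝ)| ≤ ∑ i, |(μ s i : ℝ)| := by
    rw [hdefect]
    calc _ ≤ ∑ i, |(μ s i : ℝ) * (round (x i) - x i)| := Finset.abs_sum_le_sum_abs _ _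
      _ ≤ ∑ i, |(μ s i : ℝ)| := Finset.sum_le_sum fun i _ => by
        rw [abs_mul, abs_sub_comm]
        exact mul_le_of_le_one_right (abs_nonneg _) ((abs_sub_round _).trans (by norm_num))
  exact_mod_cast hreal

theorem exists_int_mulVec_eq_zero_near [Fintype κ] :
    ∃ C : ℝ, ∀ x : ι → ℝ, μ.map ((↑) : ℤ → ℝ) *ᵥ x = 0 →
      ∃ k : ι → ℤ, μ *ᵥ k = 0 ∧ ∀ i, |(k i : ℝ) - x i| ≤ C := by
  classical
  let rounded : {x : ι → ℝ // μ.map ((↑) : ℤ → ℝ) *ᵥ x = 0} → ι → ℤ :=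
    fun x i => round (x.1 i)
  have hfinite : (Set.range ((μ *ᵥ ·) ∘ rounded)).Finite := by
    refine (Set.finite_Icc (-fun s => ∑ i, |μ s i|) fun s => ∑ i, |μ s i|).subset ?_
    rintro _ ⟨x, rfl⟩
    exact ⟨fun s => neg_le_of_abs_le (abs_mulVec_round_le μ x.2 s),
      fun s => le_of_abs_le (abs_mulVec_round_le μ x.2 s)⟩
  obtain ⟨c, hc_finite, hc⟩ := hfinite.exists_finite_range_comp_eq
  obtain ⟨C, hC⟩ := isBounded_iff_forall_norm_le.1 hc_finite.isBounded
  refine ⟨1 / 2 + C, fun x hx => ⟨rounded ⟨x, hx⟩ - c ⟨x, hx⟩, ?_, fun i => ?_⟩⟩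
  · rw [mulVec_sub, ← Function.comp_apply (f := (μ *ᵥ ·)), ← hc, Function.comp_apply, sub_self]
  · have hci : |(c ⟨x, hx⟩ i : ℝ)| ≤ C := by
      rw [← Int.norm_eq_abs]
      exact (norm_le_pi_norm _ i).trans (hC _ ⟨_, rfl⟩)
    have hround : |(round (x i) : ℝ) - x i| ≤ 1 / 2 := by
      rw [abs_sub_comm]
      exact abs_sub_round _
    calc |((round (x i) - c ⟨x, hx⟩ i : ℤ) : ℝ) - x i|
        = |((round (x i) : ℝ) - x i) - c ⟨x, hx⟩ i| := by push_cast; ring_nf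
      _ ≤ |(round (x i) : ℝ) - x i| + |(c ⟨x, hx⟩ i : ℝ)| := abs_sub _ _
      _ ≤ 1 / 2 + C := add_le_add hround hci

end IntegerKernel

theorem pwSyndeticWith_one_univ : PWSyndeticWith 1 Set.univ :=
  fun _ _ => ⟨id, fun _ _ => trivial, fun i _ => ⟨i.lt_succ_self, by simp⟩⟩

theorem constructionK_general {r t : ℕ} (n : Fin r → ℕ)
    (T : ∀ i, Matrix (Fin (n i)) (Fin (n i)) ℕ)
    (μ : Fin t → Fin r → ℤ)
    (horth : ∀ s, ∑ i, (μ s i : ℝ) * theta T i = 0) :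
    ∃ L : Set ℕ, PWSyndetic L ∧ ∃ k : ℕ → Fin r → ℤ,
      (∀ l ∈ L, ∀ s, ∑ i, μ s i * k l i = 0) ∧
      (∃ C : ℝ, ∀ l ∈ L, ∀ i, |(k l i : ℝ) - l * theta T i| ≤ C) := by
  obtain ⟨C, hC⟩ := exists_int_mulVec_eq_zero_near (Matrix.of μ)
  have hker (l : ℕ) : (Matrix.of μ).map ((↑) : ℤ → ℝ) *ᵥ ((l : ℝ) • theta T) = 0 := by
    rw [mulVec_smul, show (Matrix.of μ).map ((↑) : ℤ → ℝ) *ᵥ theta T = 0 from funext horth,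
      smul_zero]
  choose k hk using fun l : ℕ => hC _ (hker l)
  exact ⟨Set.univ, ⟨1, pwSyndeticWith_one_univ⟩, k, fun l _ s => congrFun (hk l).1 s,
    C, fun l _ i => (hk l).2 i⟩

theorem constructionK {r t : ℕ} (n : Fin r → ℕ)
    (T : ∀ i, Matrix (Fin (n i)) (Fin (n i)) ℕ)
    (hρ : ∀ i, 1 < specRad (T i))
    (μ : Fin t → Fin r → ℤ)
    (horth : ∀ s, ∑ i, (μ s i : ℝ) * theta T i = 0)
    (hli : ∀ q : Fin t → ℚ, (∀ i, ∑ s, q s * (μ s i : ℚ) = 0) → q = 0)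
    (hbasis : ∀ ν : Fin r → ℚ, (∑ i, (ν i : ℝ) * theta T i) = 0 →
      ∃ q : Fin t → ℚ, ∀ i, ν i = ∑ s, q s * (μ s i : ℚ)) :
    ∃ L : Set ℕ, PWSyndetic L ∧ ∃ k : ℕ → Fin r → ℤ,
      (∀ l ∈ L, ∀ s, ∑ i, μ s i * k l i = 0) ∧
      (∃ C : ℝ, ∀ l ∈ L, ∀ i, |(k l i : ℝ) - l * theta T i| ≤ C) :=
  constructionK_general n T μ horth

end MahlerPaper
end
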